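/- For every constant α ∈ [0,1] and every positive semidefinite matrix Σ, one has α ρᵈ(Σ) ⪯ ρᵈ(αΣ). -/

import Mathlib

/-!
Write `F = C G`. Since `R̃(αΣ) - α R̃(Σ) = (1 - α)(C Q Cᵀ + R) ⪰ 0`, it suffices that
`X ↦ (Fᵀ X⁻¹ F)⁻¹` is monotone on positive definite matrices and positively homogeneous:
then `α ρᵈ(Σ) = (Fᵀ (α R̃(Σ))⁻¹ F)⁻¹ ⪯ (Fᵀ R̃(αΣ)⁻¹ F)⁻¹ = ρᵈ(αΣ)` for `α > 0`.
Monotonicity holds because inversion reverses the Loewner order, congruence by `F` preserves it,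
and `Fᵀ X⁻¹ F` stays positive definite as `F` is injective. For `α = 0` the claim is `ρᵈ(0) ⪰ 0`.
-/

open Matrix BigOperators

noncomputable section

/-- `R̃(Σ) = C (A Σ Aᵀ + Q) Cᵀ + R`. -/
def Rt {ny nz : ℕ} (A Q : Matrix (Fin ny) (Fin ny) ℝ)
    (C : Matrix (Fin nz) (Fin ny) ℝ) (R : Matrix (Fin nz) (Fin nz) ℝ)
    (S : Matrix (Fin ny) (Fin ny) ℝ) : Matrix (Fin nz) (Fin nz) ℝ :=
  C * (A * S * Aᵀ + Q) * Cᵀ + R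

/-- Optimal unknown-input filter gain `M(Σ)`. -/
def Mg {ny nz nd : ℕ} (A Q : Matrix (Fin ny) (Fin ny) ℝ) (G : Matrix (Fin ny) (Fin nd) ℝ)
    (C : Matrix (Fin nz) (Fin ny) ℝ) (R : Matrix (Fin nz) (Fin nz) ℝ)
    (S : Matrix (Fin ny) (Fin ny) ℝ) : Matrix (Fin nd) (Fin nz) ℝ :=
  ((C * G)ᵀ * (Rt A Q C R S)⁻¹ * (C * G))⁻¹ * (C * G)ᵀ * (Rt A Q C R S)⁻¹

/-- Optimal state filter gain `K(Σ)`. -/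
def Kg {ny nz : ℕ} (A Q : Matrix (Fin ny) (Fin ny) ℝ)
    (C : Matrix (Fin nz) (Fin ny) ℝ) (R : Matrix (Fin nz) (Fin nz) ℝ)
    (S : Matrix (Fin ny) (Fin ny) ℝ) : Matrix (Fin ny) (Fin nz) ℝ :=
  (A * S * Aᵀ + Q) * Cᵀ * (Rt A Q C R S)⁻¹

/-- Closed loop matrix `Ã(Σ)`. -/
def Atil {ny nz nd : ℕ} (A Q : Matrix (Fin ny) (Fin ny) ℝ) (G : Matrix (Fin ny) (Fin nd) ℝ)
    (C : Matrix (Fin nz) (Fin ny) ℝ) (R : Matrix (Fin nz) (Fin nz) ℝ)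
    (S : Matrix (Fin ny) (Fin ny) ℝ) : Matrix (Fin ny) (Fin ny) ℝ :=
  (1 - Kg A Q C R S * C) * (1 - G * Mg A Q G C R S * C) * A

/-- `F̃(Σ)`. -/
def Ftil {ny nz nd : ℕ} (A Q : Matrix (Fin ny) (Fin ny) ℝ) (G : Matrix (Fin ny) (Fin nd) ℝ)
    (C : Matrix (Fin nz) (Fin ny) ℝ) (R : Matrix (Fin nz) (Fin nz) ℝ)
    (S : Matrix (Fin ny) (Fin ny) ℝ) : Matrix (Fin ny) (Fin ny) ℝ :=
  -((1 - Kg A Q C R S * C) * (1 - G * Mg A Q G C R S * C))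

/-- `W̃(Σ)`. -/
def Wtil {ny nz nd : ℕ} (A Q : Matrix (Fin ny) (Fin ny) ℝ) (G : Matrix (Fin ny) (Fin nd) ℝ)
    (C : Matrix (Fin nz) (Fin ny) ℝ) (R : Matrix (Fin nz) (Fin nz) ℝ)
    (S : Matrix (Fin ny) (Fin ny) ℝ) : Matrix (Fin ny) (Fin nz) ℝ :=
  G * Mg A Q G C R S - Kg A Q C R S * C * G * Mg A Q G C R S + Kg A Q C R S

/-- The state error covariance update map `ρ(Σ)`. -/
def rho {ny nz nd : ℕ} (A Q : Matrix (Fin ny) (Fin ny) ℝ) (G : Matrix (Fin ny) (Fin nd) ℝ)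
    (C : Matrix (Fin nz) (Fin ny) ℝ) (R : Matrix (Fin nz) (Fin nz) ℝ)
    (S : Matrix (Fin ny) (Fin ny) ℝ) : Matrix (Fin ny) (Fin ny) ℝ :=
  Atil A Q G C R S * S * (Atil A Q G C R S)ᵀ
    + Ftil A Q G C R S * Q * (Ftil A Q G C R S)ᵀ
    + Wtil A Q G C R S * R * (Wtil A Q G C R S)ᵀ

/-- The unknown-input error covariance update map `ρᵈ(Σ)`. -/
def rhod {ny nz nd : ℕ} (A Q : Matrix (Fin ny) (Fin ny) ℝ) (G : Matrix (Fin ny) (Fin nd) ℝ)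
    (C : Matrix (Fin nz) (Fin ny) ℝ) (R : Matrix (Fin nz) (Fin nz) ℝ)
    (S : Matrix (Fin ny) (Fin ny) ℝ) : Matrix (Fin nd) (Fin nd) ℝ :=
  ((C * G)ᵀ * (Rt A Q C R S)⁻¹ * (C * G))⁻¹

open scoped MatrixOrder ComplexOrder

namespace Matrix

variable {m n 𝕜 : Type*} [RCLike 𝕜]

-- No side conditions: when `c = 0` or `A` is singular, both sides are the junk value `0`.
lemma inv_smul₀ [Fintype n] [DecidableEq n] {K : Type*} [Field K] (c : K) (A : Matrix n n K) :
    (c • A)⁻¹ = c⁻¹ • A⁻¹ := by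
  rcases eq_or_ne c 0 with rfl | hc
  · simp
  by_cases hA : IsUnit A.det
  · simpa [Units.smul_def] using inv_smul' A (Units.mk0 c hc) hA
  · have hcA : ¬IsUnit (c • A).det := by simpa [det_smul, hc] using hA
    rw [nonsing_inv_apply_not_isUnit _ hcA, nonsing_inv_apply_not_isUnit _ hA, smul_zero]

lemma mulVec_injective_of_rank_eq [Fintype n] {F : Matrix m n 𝕜} (hF : F.rank = Fintype.card n) :
    Function.Injective F.mulVec := by
  have h := LinearMap.finrank_range_add_finrank_ker F.mulVecLin
  rw [← Matrix.rank, hF, Module.finrank_fintype_fun_eq_card, add_eq_left,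
    Submodule.finrank_eq_zero, LinearMap.ker_eq_bot] at h
  exact h

lemma conjTranspose_mul_mul_le_of_le [Fintype n] [Fintype m] {X Y : Matrix n n 𝕜} (h : X ≤ Y)
    (B : Matrix n m 𝕜) : Bᴴ * X * B ≤ Bᴴ * Y * B := by
  rw [le_iff] at h ⊢
  simpa only [Matrix.mul_sub, Matrix.sub_mul] using h.conjTranspose_mul_mul_same B

lemma PosDef.posDef_of_le {X Y : Matrix n n 𝕜} (hX : X.PosDef) (hXY : X ≤ Y) : Y.PosDef := by
  simpa using hX.add_posSemidef hXY

lemma PosDef.inv_le_inv [Fintype n] [DecidableEq n] {X Y : Matrix n n 𝕜} (hX : X.PosDef)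
    (hXY : X ≤ Y) : Y⁻¹ ≤ X⁻¹ := by
  set D := Y - X
  have hD : D.PosSemidef := hXY
  have hY : Y.PosDef := hX.posDef_of_le hXY
  have hXu : IsUnit X.det := (isUnit_iff_isUnit_det X).mp hX.isUnit
  have hYu : IsUnit Y.det := (isUnit_iff_isUnit_det Y).mp hY.isUnit
  have key : X⁻¹ - Y⁻¹ = Y⁻¹ * (D + Dᴴ * X⁻¹ * D) * Y⁻¹ :=
    calc X⁻¹ - Y⁻¹ = Y⁻¹ * D * X⁻¹ := by
          simp [D, Matrix.mul_sub, Matrix.sub_mul, nonsing_inv_mul _ hYu,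
            mul_nonsing_inv_cancel_right _ _ hXu]
      _ = Y⁻¹ * D * X⁻¹ * (X + D) * Y⁻¹ := by
          rw [add_sub_cancel, mul_nonsing_inv_cancel_right _ _ hYu]
      _ = Y⁻¹ * (D + Dᴴ * X⁻¹ * D) * Y⁻¹ := by
          simp only [hD.isHermitian.eq, Matrix.mul_add, Matrix.add_mul,
            nonsing_inv_mul_cancel_right _ _ hXu, Matrix.mul_assoc]
  rw [le_iff, key]
  simpa [hY.isHermitian.inv.eq] using
    (hD.add (hX.inv.posSemidef.conjTranspose_mul_mul_same D)).mul_mul_conjTranspose_same Y⁻¹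

lemma PosDef.inv_conjTranspose_mul_inv_mul_le [Fintype n] [DecidableEq n] [Fintype m]
    [DecidableEq m] {X Y : Matrix n n 𝕜} (hX : X.PosDef) (hXY : X ≤ Y) {F : Matrix n m 𝕜}
    (hF : Function.Injective F.mulVec) : (Fᴴ * X⁻¹ * F)⁻¹ ≤ (Fᴴ * Y⁻¹ * F)⁻¹ := by
  have hFYF : (Fᴴ * Y⁻¹ * F).PosDef := (hX.posDef_of_le hXY).inv.conjTranspose_mul_mul_same hF
  exact hFYF.inv_le_inv (conjTranspose_mul_mul_le_of_le (hX.inv_le_inv hXY) F)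

lemma PosSemidef.inv_conjTranspose_mul_inv_mul [Fintype n] [DecidableEq n] [Fintype m]
    [DecidableEq m] {X : Matrix n n 𝕜} (hX : X.PosSemidef) (F : Matrix n m 𝕜) :
    (Fᴴ * X⁻¹ * F)⁻¹.PosSemidef :=
  (hX.inv.conjTranspose_mul_mul_same F).inv

lemma inv_conjTranspose_mul_inv_smul_mul [Fintype n] [DecidableEq n] [Fintype m]
    [DecidableEq m] (c : 𝕜) (X : Matrix n n 𝕜) (F : Matrix n m 𝕜) :
    (Fᴴ * (c • X)⁻¹ * F)⁻¹ = c • (Fᴴ * X⁻¹ * F)⁻¹ := by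
  rw [inv_smul₀, Matrix.mul_smul, Matrix.smul_mul, inv_smul₀, inv_inv]

end Matrix

section InputUpdate

variable {ny nz : ℕ} {A Q : Matrix (Fin ny) (Fin ny) ℝ} {C : Matrix (Fin nz) (Fin ny) ℝ}
  {R : Matrix (Fin nz) (Fin nz) ℝ}

lemma Rt_posDef (hQ : Q.PosSemidef) (hR : R.PosDef) {S : Matrix (Fin ny) (Fin ny) ℝ}
    (hS : S.PosSemidef) : (Rt A Q C R S).PosDef := by
  have hASA : (A * S * Aᵀ).PosSemidef := by simpa using hS.mul_mul_conjTranspose_same A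
  simpa [Rt] using PosDef.posSemidef_add ((hASA.add hQ).mul_mul_conjTranspose_same C) hR

lemma smul_Rt_le_Rt_smul (hQ : Q.PosSemidef) (hR : R.PosSemidef) {α : ℝ} (hα : α ≤ 1)
    (S : Matrix (Fin ny) (Fin ny) ℝ) : α • Rt A Q C R S ≤ Rt A Q C R (α • S) := by
  have hdiff : Rt A Q C R (α • S) - α • Rt A Q C R S = (1 - α) • (C * Q * Cᵀ + R) := by
    simp only [Rt, Matrix.mul_add, Matrix.add_mul, Matrix.mul_smul, Matrix.smul_mul, smul_add,
      sub_smul, one_smul]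
    abel
  rw [le_iff, hdiff]
  have hCQC : (C * Q * Cᵀ).PosSemidef := by simpa using hQ.mul_mul_conjTranspose_same C
  exact (hCQC.add hR).smul (by linarith)

end InputUpdate

/-- for every `α ∈ [0,1]` and every PSD `Σ`, `α ρᵈ(Σ) ⪯ ρᵈ(αΣ)`. -/
theorem input_update_scaling {ny nz nd : ℕ}
    (A Q : Matrix (Fin ny) (Fin ny) ℝ) (G : Matrix (Fin ny) (Fin nd) ℝ)
    (C : Matrix (Fin nz) (Fin ny) ℝ) (R : Matrix (Fin nz) (Fin nz) ℝ)
    (hQ : Q.PosDef) (hR : R.PosDef) (hF : (C * G).rank = nd)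
    (α : ℝ) (hα0 : 0 ≤ α) (hα1 : α ≤ 1)
    (S : Matrix (Fin ny) (Fin ny) ℝ) (hS : S.PosSemidef) :
    (rhod A Q G C R (α • S) - α • rhod A Q G C R S).PosSemidef := by
  rw [← le_iff]
  simp only [rhod, ← conjTranspose_eq_transpose_of_trivial]
  rcases hα0.eq_or_lt with rfl | hα
  · rw [zero_smul, zero_smul]
    exact ((Rt_posDef hQ.posSemidef hR .zero).posSemidef.inv_conjTranspose_mul_inv_mul _).nonneg
  · have hCG : Function.Injective (C * G).mulVec := mulVec_injective_of_rank_eq (by simpa using hF)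
    have hαRt : (α • Rt A Q C R S).PosDef := (Rt_posDef hQ.posSemidef hR hS).smul hα
    rw [← inv_conjTranspose_mul_inv_smul_mul]
    exact hαRt.inv_conjTranspose_mul_inv_mul_le
      (smul_Rt_le_Rt_smul hQ.posSemidef hR.posSemidef hα1 S) hCG
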